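/- arXiv:2308.03481 — 2 statements merged into one kernel-verified Lean document; each statement's English description precedes it below -/
import Mathlib

section
/- If A and B are n×n Hermitian complex matrices, then for each k, the difference of their k-th largest eigenvalues is bounded by the operator norm of A − B: max_k |λ_k(A) − λ_k(B)| ≤ ‖A − B‖. -/
/-!
Weyl's inequality by the Courant–Fischer dimension count. Let `T` have orthonormal eigenvectors
`eᵢ` with decreasing eigenvalues `μᵢ` and `S` orthonormal eigenvectors `fᵢ` with decreasing
eigenvalues `νᵢ`. The spans of `{eᵢ | i ≤ k}` and `{fᵢ | k ≤ i}` have dimensions `k + 1` and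
`n - k`, so they share some `x ≠ 0`. For it `μₖ ‖x‖² ≤ re ⟪T x, x⟫` and `re ⟪S x, x⟫ ≤ νₖ ‖x‖²`,
hence `(μₖ - νₖ) ‖x‖² ≤ re ⟪(T - S) x, x⟫ ≤ ‖T - S‖ ‖x‖²`.
-/

open Matrix

/-- The operator (spectral) norm of a square complex matrix. -/
noncomputable def opNorm {n : ℕ} (M : Matrix (Fin n) (Fin n) ℂ) : ℝ :=
  ‖LinearMap.toContinuousLinearMap (Matrix.toEuclideanLin M)‖

/-- `μ : Fin n → ℝ` lists the eigenvalues of the Hermitian matrix `A` in decreasing order: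
it is antitone and is a rearrangement of the eigenvalues of `A`. -/
def IsDecrEigenvalues {n : ℕ} {A : Matrix (Fin n) (Fin n) ℂ} (hA : A.IsHermitian)
    (μ : Fin n → ℝ) : Prop :=
  Antitone μ ∧ ∃ σ : Equiv.Perm (Fin n), ∀ k, μ k = hA.eigenvalues (σ k)

open Module

section

variable {𝕜 E ι : Type*} [RCLike 𝕜] [NormedAddCommGroup E] [InnerProductSpace 𝕜 E] [Fintype ι]

namespace OrthonormalBasis

theorem norm_sq_eq_sum_norm_sq_repr (b : OrthonormalBasis ι 𝕜 E) (x : E) :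
    ‖x‖ ^ 2 = ∑ i, ‖b.repr x i‖ ^ 2 := by
  rw [← b.repr.norm_map, EuclideanSpace.norm_sq_eq]

theorem repr_apply_of_apply_eq_smul {F : Type*} [FunLike F E E] [LinearMapClass F 𝕜 E E] {T : F}
    {b : OrthonormalBasis ι 𝕜 E} {μ : ι → 𝕜} (hT : ∀ i, T (b i) = μ i • b i) (x : E) (i : ι) :
    b.repr (T x) i = μ i * b.repr x i := by
  classical
  conv_lhs => rw [← b.sum_repr x]
  simp [map_sum, hT, smul_smul, b.repr_self, Pi.single_apply, mul_comm]

theorem finrank_span_image (b : OrthonormalBasis ι 𝕜 E) (S : Finset ι) :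
    finrank 𝕜 (Submodule.span 𝕜 (b '' S)) = S.card := by
  have hli : LinearIndependent 𝕜 fun i : (S : Set ι) => b i :=
    (b.orthonormal.comp _ Subtype.val_injective).linearIndependent
  rw [Set.image_eq_range, finrank_span_eq_card hli]
  simp

end OrthonormalBasis

theorem Submodule.exists_mem_inf_ne_zero_of_finrank_lt_add [FiniteDimensional 𝕜 E]
    (V W : Submodule 𝕜 E) (h : finrank 𝕜 E < finrank 𝕜 V + finrank 𝕜 W) :
    ∃ x ∈ V ⊓ W, x ≠ 0 := by
  by_contra! hVW
  exact h.not_ge <| Submodule.finrank_add_finrank_le_of_disjoint <|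
    Submodule.disjoint_def.2 fun x hV hW => hVW x ⟨hV, hW⟩

namespace ContinuousLinearMap

theorem reApplyInnerSelf_sub (T S : E →L[𝕜] E) (x : E) :
    (T - S).reApplyInnerSelf x = T.reApplyInnerSelf x - S.reApplyInnerSelf x := by
  simp [reApplyInnerSelf_apply, inner_sub_left]

theorem reApplyInnerSelf_le_norm_mul_sq (T : E →L[𝕜] E) (x : E) :
    T.reApplyInnerSelf x ≤ ‖T‖ * ‖x‖ ^ 2 :=
  calc T.reApplyInnerSelf x ≤ ‖T x‖ * ‖x‖ := re_inner_le_norm _ _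
    _ ≤ ‖T‖ * ‖x‖ * ‖x‖ := by gcongr; exact T.le_opNorm x
    _ = ‖T‖ * ‖x‖ ^ 2 := by ring

variable {T S : E →L[𝕜] E} {b : OrthonormalBasis ι 𝕜 E} {μ : ι → ℝ}

theorem reApplyInnerSelf_eq_sum (hT : ∀ i, T (b i) = (μ i : 𝕜) • b i) (x : E) :
    T.reApplyInnerSelf x = ∑ i, μ i * ‖b.repr x i‖ ^ 2 := by
  rw [reApplyInnerSelf_apply, ← b.repr.inner_map_map, PiLp.inner_apply, map_sum]
  refine Finset.sum_congr rfl fun i _ => ?_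
  rw [OrthonormalBasis.repr_apply_of_apply_eq_smul hT, RCLike.inner_apply',
    (starRingEnd 𝕜).map_mul, RCLike.conj_ofReal, mul_assoc, RCLike.conj_mul, ← RCLike.ofReal_pow,
    RCLike.re_ofReal_mul, RCLike.ofReal_re]

theorem mul_norm_sq_le_reApplyInnerSelf (hT : ∀ i, T (b i) = (μ i : 𝕜) • b i) {s : Set ι}
    {m : ℝ} (hm : ∀ i ∈ s, m ≤ μ i) {x : E} (hx : x ∈ Submodule.span 𝕜 (b '' s)) :
    m * ‖x‖ ^ 2 ≤ T.reApplyInnerSelf x := by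
  rw [reApplyInnerSelf_eq_sum hT, b.norm_sq_eq_sum_norm_sq_repr, Finset.mul_sum]
  rw [← b.coe_toBasis, b.toBasis.mem_span_image] at hx
  refine Finset.sum_le_sum fun i _ => ?_
  by_cases hi : b.repr x i = 0
  · simp [hi]
  · gcongr
    exact hm i (hx (by simpa using hi))

theorem reApplyInnerSelf_le_mul_norm_sq (hT : ∀ i, T (b i) = (μ i : 𝕜) • b i) {s : Set ι}
    {m : ℝ} (hm : ∀ i ∈ s, μ i ≤ m) {x : E} (hx : x ∈ Submodule.span 𝕜 (b '' s)) :
    T.reApplyInnerSelf x ≤ m * ‖x‖ ^ 2 := by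
  rw [reApplyInnerSelf_eq_sum hT, b.norm_sq_eq_sum_norm_sq_repr, Finset.mul_sum]
  rw [← b.coe_toBasis, b.toBasis.mem_span_image] at hx
  refine Finset.sum_le_sum fun i _ => ?_
  by_cases hi : b.repr x i = 0
  · simp [hi]
  · gcongr
    exact hm i (hx (by simpa using hi))

theorem sub_le_norm_sub_of_antitone {n : ℕ} {bT bS : OrthonormalBasis (Fin n) 𝕜 E}
    {μ ν : Fin n → ℝ} (hμ : Antitone μ) (hν : Antitone ν)
    (hT : ∀ i, T (bT i) = (μ i : 𝕜) • bT i) (hS : ∀ i, S (bS i) = (ν i : 𝕜) • bS i) (k : Fin n) :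
    μ k - ν k ≤ ‖T - S‖ := by
  have := bT.toBasis.finiteDimensional_of_finite
  obtain ⟨x, ⟨hxT, hxS⟩, hx⟩ := Submodule.exists_mem_inf_ne_zero_of_finrank_lt_add
    (Submodule.span 𝕜 (bT '' (Finset.Iic k : Set (Fin n))))
    (Submodule.span 𝕜 (bS '' (Finset.Ici k : Set (Fin n)))) (by
      rw [finrank_eq_card_basis bT.toBasis, bT.finrank_span_image, bS.finrank_span_image,
        Fin.card_Iic, Fin.card_Ici, Fintype.card_fin]
      omega)
  have hTx := mul_norm_sq_le_reApplyInnerSelf hT (fun i hi => hμ (Finset.mem_Iic.1 hi)) hxT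
  have hSx := reApplyInnerSelf_le_mul_norm_sq hS (fun i hi => hν (Finset.mem_Ici.1 hi)) hxS
  have hTSx := (T - S).reApplyInnerSelf_le_norm_mul_sq x
  rw [reApplyInnerSelf_sub] at hTSx
  exact le_of_mul_le_mul_right (by linarith) (by positivity : 0 < ‖x‖ ^ 2)

end ContinuousLinearMap

end

theorem IsDecrEigenvalues.exists_orthonormalBasis {n : ℕ} {A : Matrix (Fin n) (Fin n) ℂ}
    {hA : A.IsHermitian} {μ : Fin n → ℝ} (h : IsDecrEigenvalues hA μ) :
    ∃ b : OrthonormalBasis (Fin n) ℂ (EuclideanSpace ℂ (Fin n)),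
      ∀ i, LinearMap.toContinuousLinearMap (toEuclideanLin A) (b i) = (μ i : ℂ) • b i := by
  obtain ⟨-, σ, hσ⟩ := h
  refine ⟨hA.eigenvectorBasis.reindex σ.symm, fun i => ?_⟩
  rw [OrthonormalBasis.reindex_apply, Equiv.symm_symm, hσ, LinearMap.coe_toContinuousLinearMap',
    toLpLin_apply, hA.mulVec_eigenvectorBasis]
  ext j
  simp

theorem opNorm_sub {n : ℕ} (A B : Matrix (Fin n) (Fin n) ℂ) :
    opNorm (A - B) = ‖LinearMap.toContinuousLinearMap (toEuclideanLin A) -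
      LinearMap.toContinuousLinearMap (toEuclideanLin B)‖ := by
  rw [opNorm, map_sub, map_sub]

/-- Weyl's perturbation inequality: for Hermitian `n × n` complex matrices `A` and `B`,
the `k`-th largest eigenvalues satisfy `|λ_k(A) − λ_k(B)| ≤ ‖A − B‖`. -/
theorem eigenvalue_perturbation {n : ℕ}
    {A B : Matrix (Fin n) (Fin n) ℂ} (hA : A.IsHermitian) (hB : B.IsHermitian)
    (μA μB : Fin n → ℝ)
    (hμA : IsDecrEigenvalues hA μA) (hμB : IsDecrEigenvalues hB μB) :
    ∀ k, |μA k - μB k| ≤ opNorm (A - B) := by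
  obtain ⟨bA, hbA⟩ := hμA.exists_orthonormalBasis
  obtain ⟨bB, hbB⟩ := hμB.exists_orthonormalBasis
  intro k
  rw [abs_sub_le_iff, opNorm_sub]
  constructor
  · exact ContinuousLinearMap.sub_le_norm_sub_of_antitone hμA.1 hμB.1 hbA hbB k
  · rw [norm_sub_rev]
    exact ContinuousLinearMap.sub_le_norm_sub_of_antitone hμB.1 hμA.1 hbB hbA k
end

section
/- Fix 0 < y ≤ 1, a probability measure H on [0,∞)×(0,∞), z ∈ ℂ⁺, and s̲, g̲ ∈ ℂ⁺ such that 1 + u g̲ + t s̲ ≠ 0 H-almost everywhere. If (z, s̲, g̲) satisfies the system z = −(1−y)/s̲ − (y/s̲)·∫ dH(u,t)/(1 + u g̲ + t s̲) and z = −1/g̲ + y·∫ t dH(u,t)/(1 + u g̲ + t s̲), then y·g̲²·∫ u dH(u,t)/(1 + u g̲ + t s̲) + s̲ − g̲ = 0. -/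
open MeasureTheory

/-! Multiplying the two equations for `z` by `s̲ g̲` and subtracting them gives
`y g̲ (1 - ∫ 1/D - s̲ ∫ t/D) = g̲ - s̲` with `D = 1 + u g̲ + t s̲`. Integrating the pointwise
identity `g̲ u/D = 1 - 1/D - s̲ t/D` against the probability measure `H` identifies the bracket
with `g̲ ∫ u/D`. -/

theorem mul_integral_mul_inv_one_add_eq {α : Type*} [MeasurableSpace α] {μ : Measure α}
    [IsProbabilityMeasure μ] {u t : α → ℂ} {g s : ℂ}
    (hden : ∀ᵐ p ∂μ, 1 + u p * g + t p * s ≠ 0)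
    (hint1 : Integrable (fun p => (1 + u p * g + t p * s)⁻¹) μ)
    (hintt : Integrable (fun p => t p * (1 + u p * g + t p * s)⁻¹) μ) :
    g * ∫ p, u p * (1 + u p * g + t p * s)⁻¹ ∂μ
      = 1 - ∫ p, (1 + u p * g + t p * s)⁻¹ ∂μ - s * ∫ p, t p * (1 + u p * g + t p * s)⁻¹ ∂μ := by
  have hpointwise : (fun p => g * (u p * (1 + u p * g + t p * s)⁻¹))
      =ᵐ[μ] fun p => 1 - (1 + u p * g + t p * s)⁻¹ - s * (t p * (1 + u p * g + t p * s)⁻¹) := by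
    filter_upwards [hden] with p hp
    linear_combination mul_inv_cancel₀ hp
  have hint_sub : Integrable (fun p => 1 - (1 + u p * g + t p * s)⁻¹) μ :=
    (integrable_const 1).sub hint1
  rw [← integral_const_mul, integral_congr_ae hpointwise,
    integral_sub hint_sub (hintt.const_mul s),
    integral_sub (integrable_const 1) hint1, integral_const_mul]
  simp

theorem equating_the_two_equations_general
    (y : ℝ)
    (H : Measure (ℝ × ℝ)) [IsProbabilityMeasure H]
    (z s g : ℂ) (hs : 0 < s.im) (hg : 0 < g.im)
    (hden : ∀ᵐ p ∂H, (1 : ℂ) + (p.1 : ℂ) * g + (p.2 : ℂ) * s ≠ 0)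
    (hint1 : Integrable (fun p : ℝ × ℝ => ((1 : ℂ) + (p.1 : ℂ) * g + (p.2 : ℂ) * s)⁻¹) H)
    (hintt : Integrable
      (fun p : ℝ × ℝ => (p.2 : ℂ) * ((1 : ℂ) + (p.1 : ℂ) * g + (p.2 : ℂ) * s)⁻¹) H)
    (heq1 : z = -((1 : ℂ) - y) / s
        - ((y : ℂ) / s) * ∫ p : ℝ × ℝ, ((1 : ℂ) + (p.1 : ℂ) * g + (p.2 : ℂ) * s)⁻¹ ∂H)
    (heq2 : z = -1 / g
        + (y : ℂ) * ∫ p : ℝ × ℝ, (p.2 : ℂ) * ((1 : ℂ) + (p.1 : ℂ) * g + (p.2 : ℂ) * s)⁻¹ ∂H) :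
    (y : ℂ) * g ^ 2
        * (∫ p : ℝ × ℝ, (p.1 : ℂ) * ((1 : ℂ) + (p.1 : ℂ) * g + (p.2 : ℂ) * s)⁻¹ ∂H)
      + s - g = 0 := by
  have hs0 : s ≠ 0 := fun h => by simp [h] at hs
  have hg0 : g ≠ 0 := fun h => by simp [h] at hg
  have hu := mul_integral_mul_inv_one_add_eq hden hint1 hintt
  rw [pow_two, mul_assoc, mul_assoc, hu]
  generalize (∫ p : ℝ × ℝ, ((1 : ℂ) + (p.1 : ℂ) * g + (p.2 : ℂ) * s)⁻¹ ∂H) = I₁ at heq1 ⊢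
  generalize (∫ p : ℝ × ℝ, (p.2 : ℂ) * ((1 : ℂ) + (p.1 : ℂ) * g + (p.2 : ℂ) * s)⁻¹ ∂H) = Iₜ
    at heq2 ⊢
  have hz := heq1.symm.trans heq2
  field_simp at hz
  linear_combination hz

/-- If `(z, s̲, g̲)` satisfies the system
`z = −(1−y)/s̲ − (y/s̲)·∫ dH/(1 + u g̲ + t s̲)` and
`z = −1/g̲ + y·∫ t dH/(1 + u g̲ + t s̲)`, then
`y·g̲²·∫ u dH/(1 + u g̲ + t s̲) + s̲ − g̲ = 0`. -/
theorem equating_the_two_equations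
    (y : ℝ) (hy0 : 0 < y) (hy1 : y ≤ 1)
    (H : Measure (ℝ × ℝ)) [IsProbabilityMeasure H]
    (hH : ∀ᵐ p ∂H, 0 ≤ p.1 ∧ 0 < p.2)
    (z s g : ℂ) (hz : 0 < z.im) (hs : 0 < s.im) (hg : 0 < g.im)
    (hden : ∀ᵐ p ∂H, (1 : ℂ) + (p.1 : ℂ) * g + (p.2 : ℂ) * s ≠ 0)
    (hint1 : Integrable (fun p : ℝ × ℝ => ((1 : ℂ) + (p.1 : ℂ) * g + (p.2 : ℂ) * s)⁻¹) H)
    (hintt : Integrable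
      (fun p : ℝ × ℝ => (p.2 : ℂ) * ((1 : ℂ) + (p.1 : ℂ) * g + (p.2 : ℂ) * s)⁻¹) H)
    (hintu : Integrable
      (fun p : ℝ × ℝ => (p.1 : ℂ) * ((1 : ℂ) + (p.1 : ℂ) * g + (p.2 : ℂ) * s)⁻¹) H)
    (heq1 : z = -((1 : ℂ) - y) / s
        - ((y : ℂ) / s) * ∫ p : ℝ × ℝ, ((1 : ℂ) + (p.1 : ℂ) * g + (p.2 : ℂ) * s)⁻¹ ∂H)
    (heq2 : z = -1 / g
        + (y : ℂ) * ∫ p : ℝ × ℝ, (p.2 : ℂ) * ((1 : ℂ) + (p.1 : ℂ) * g + (p.2 : ℂ) * s)⁻¹ ∂H) :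
    (y : ℂ) * g ^ 2
        * (∫ p : ℝ × ℝ, (p.1 : ℂ) * ((1 : ℂ) + (p.1 : ℂ) * g + (p.2 : ℂ) * s)⁻¹ ∂H)
      + s - g = 0 :=
  equating_the_two_equations_general y H z s g hs hg hden hint1 hintt heq1 heq2
end
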